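/- arXiv:2011.05082 — 3 statements merged into one kernel-verified Lean document; each statement's English description precedes it below -/
import Mathlib

section
/- Let P(z) = min_{Ax=0} { f(x) + r(x) + (κ/2)‖x - z‖² } with κ > -μ where f satisfies the μ-lower-curvature inequality and r is proper closed convex with the feasible set {Ax = 0} nonempty. Suppose the minimizer x(z) exists uniquely and z ↦ x(z) is σ₄⁻¹-Lipschitz with σ₄ = (κ+μ)/κ. Then P is differentiable with ∇P(z) = κ(z - x(z)), and ∇P is Lipschitz continuous with constant κ(1 + 1/σ₄). -/
open scoped RealInnerProductSpace

lemma stmt12_aux {d : ℕ} (a b c : EuclideanSpace ℝ (Fin d)) :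
    ‖a - c‖ ^ 2 - ‖a - b‖ ^ 2 = ‖c - b‖ ^ 2 + 2 * ⟪b - a, c - b⟫ := by
  simp only [← real_inner_self_eq_norm_sq, inner_sub_left, inner_sub_right]
  rw [real_inner_comm b a, real_inner_comm c a, real_inner_comm c b]
  ring

theorem stmt12 {d e : ℕ} (f r : EuclideanSpace ℝ (Fin d) → ℝ)
    (A : EuclideanSpace ℝ (Fin d) →L[ℝ] EuclideanSpace ℝ (Fin e)) (μ κ : ℝ)
    (hf : Differentiable ℝ f)
    (hcurv : ∀ x y, f x - f y - ⟪gradient f y, x - y⟫ ≥ μ / 2 * ‖x - y‖ ^ 2)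
    (hr : ConvexOn ℝ Set.univ r) (hrl : LowerSemicontinuous r)
    (hκμ : κ > -μ) (hκ : 0 < κ)
    (xz : EuclideanSpace ℝ (Fin d) → EuclideanSpace ℝ (Fin d))
    (hfeas : ∀ z, A (xz z) = 0)
    (hmin : ∀ z, IsMinOn (fun x => f x + r x + κ / 2 * ‖x - z‖ ^ 2)
      {x | A x = 0} (xz z))
    (huniq : ∀ z x, A x = 0 →
      IsMinOn (fun x => f x + r x + κ / 2 * ‖x - z‖ ^ 2) {x | A x = 0} x → x = xz z)
    (σ4 : ℝ) (hσ4 : σ4 = (κ + μ) / κ)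
    (hlip : ∀ z₁ z₂, ‖xz z₁ - xz z₂‖ ≤ σ4⁻¹ * ‖z₁ - z₂‖)
    (P : EuclideanSpace ℝ (Fin d) → ℝ)
    (hP : ∀ z, P z = f (xz z) + r (xz z) + κ / 2 * ‖xz z - z‖ ^ 2) :
    (∀ z, HasGradientAt P (κ • (z - xz z)) z) ∧
    ∀ z₁ z₂, ‖κ • (z₁ - xz z₁) - κ • (z₂ - xz z₂)‖
      ≤ κ * (1 + 1 / σ4) * ‖z₁ - z₂‖ := by
  have hσ4pos : 0 < σ4 := by
    rw [hσ4]; exact div_pos (by linarith) hκ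
  have hσinv : 0 ≤ σ4⁻¹ := inv_nonneg.mpr hσ4pos.le
  -- Lipschitz continuity of the gradient map
  have hglip : ∀ z₁ z₂ : EuclideanSpace ℝ (Fin d),
      ‖κ • (z₁ - xz z₁) - κ • (z₂ - xz z₂)‖ ≤ κ * (1 + σ4⁻¹) * ‖z₁ - z₂‖ := by
    intro z₁ z₂
    have h1 : κ • (z₁ - xz z₁) - κ • (z₂ - xz z₂)
        = κ • ((z₁ - z₂) - (xz z₁ - xz z₂)) := by
      rw [← smul_sub]; congr 1; abel
    rw [h1, norm_smul, Real.norm_eq_abs, abs_of_pos hκ]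
    have h2 : ‖(z₁ - z₂) - (xz z₁ - xz z₂)‖ ≤ ‖z₁ - z₂‖ + σ4⁻¹ * ‖z₁ - z₂‖ :=
      le_trans (norm_sub_le _ _) (by linarith [hlip z₁ z₂])
    nlinarith [norm_nonneg (z₁ - z₂)]
  -- key inequality
  have hkey : ∀ z₁ z₂ : EuclideanSpace ℝ (Fin d),
      P z₂ - P z₁ - ⟪κ • (z₁ - xz z₁), z₂ - z₁⟫ ≤ κ / 2 * ‖z₂ - z₁‖ ^ 2 := by
    intro z₁ z₂
    have hm : f (xz z₂) + r (xz z₂) + κ / 2 * ‖xz z₂ - z₂‖ ^ 2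
        ≤ f (xz z₁) + r (xz z₁) + κ / 2 * ‖xz z₁ - z₂‖ ^ 2 :=
      isMinOn_iff.mp (hmin z₂) (xz z₁) (hfeas z₁)
    have hexp : ‖xz z₁ - z₂‖ ^ 2 - ‖xz z₁ - z₁‖ ^ 2
        = ‖z₂ - z₁‖ ^ 2 + 2 * ⟪z₁ - xz z₁, z₂ - z₁⟫ := stmt12_aux _ _ _
    have hin : ⟪κ • (z₁ - xz z₁), z₂ - z₁⟫ = κ * ⟪z₁ - xz z₁, z₂ - z₁⟫ :=
      real_inner_smul_left _ _ _
    rw [hP z₁, hP z₂, hin]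
    nlinarith
  constructor
  · intro z
    rw [hasGradientAt_iff_isLittleO, Asymptotics.isLittleO_iff]
    intro c hc
    set C : ℝ := κ * (3 / 2 + σ4⁻¹) with hC
    have hCpos : 0 < C := by positivity
    have hbound : ∀ x : EuclideanSpace ℝ (Fin d),
        ‖P x - P z - ⟪κ • (z - xz z), x - z⟫‖ ≤ C * ‖x - z‖ ^ 2 := by
      intro x
      have h1 := hkey z x
      have h2 := hkey x z
      -- lower bound
      have hswap : ⟪κ • (x - xz x), z - x⟫ = -⟪κ • (x - xz x), x - z⟫ := by
        rw [← inner_neg_right]; congr 1; abel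
      have hnorm : ‖z - x‖ = ‖x - z‖ := by rw [← neg_sub, norm_neg]
      have hdiff : ⟪κ • (x - xz x), x - z⟫ - ⟪κ • (z - xz z), x - z⟫
          = ⟪κ • (x - xz x) - κ • (z - xz z), x - z⟫ := by
        rw [inner_sub_left]
      have hcs : |⟪κ • (x - xz x) - κ • (z - xz z), x - z⟫|
          ≤ κ * (1 + σ4⁻¹) * ‖x - z‖ * ‖x - z‖ := by
        refine le_trans (abs_real_inner_le_norm _ _) ?_
        have := hglip x z
        have hn : ‖x - z‖ = ‖z - x‖ := hnorm.symm
        nlinarith [norm_nonneg (x - z), norm_nonneg (κ • (x - xz x) - κ • (z - xz z))]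
      rw [Real.norm_eq_abs, abs_le]
      constructor
      · -- lower bound from h2
        have habs := abs_le.mp hcs
        rw [hswap, hnorm] at h2
        nlinarith [sq_nonneg ‖x - z‖]
      · have hCk : κ / 2 * ‖x - z‖ ^ 2 ≤ C * ‖x - z‖ ^ 2 := by
          apply mul_le_mul_of_nonneg_right _ (sq_nonneg _)
          rw [hC]; nlinarith
        linarith [h1]
    have hev : ∀ᶠ x in nhds z, ‖x - z‖ ≤ c / C := by
      have : Metric.closedBall z (c / C) ∈ nhds z :=
        Metric.closedBall_mem_nhds z (by positivity)
      filter_upwards [this] with x hx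
      rw [Metric.mem_closedBall, dist_eq_norm] at hx
      exact hx
    filter_upwards [hev] with x hx
    refine le_trans (hbound x) ?_
    have : C * ‖x - z‖ ≤ c := by
      rcases le_or_gt (‖x - z‖) (c / C) with h | h
      · calc C * ‖x - z‖ ≤ C * (c / C) := by nlinarith [norm_nonneg (x - z)]
          _ = c := by field_simp
      · linarith
    calc C * ‖x - z‖ ^ 2 = (C * ‖x - z‖) * ‖x - z‖ := by ring
      _ ≤ c * ‖x - z‖ := by nlinarith [norm_nonneg (x - z)]
  · intro z₁ z₂
    rw [one_div]
    exact hglip z₁ z₂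
end

section
/- Let h(x) = f(x) + (κ/2)‖x - z‖² + ⟨λ, Ax⟩ + (c/2)‖Ax‖² + r(x) where f satisfies the μ-lower-curvature inequality, κ > -μ, and r is proper closed convex. For fixed z, let x(z; λ) denote the unique minimizer over x. Then for any two dual vectors λ₁, λ₂: ‖x(z; λ₁) - x(z; λ₂)‖ ≤ (σ_A/(κ+μ))‖λ₁ - λ₂‖, where σ_A is the largest singular value of A. -/
open scoped RealInnerProductSpace

lemma sq_combo' {E : Type*} [NormedAddCommGroup E] [InnerProductSpace ℝ E]
    (u v : E) (t : ℝ) :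
    ‖(1-t) • u + t • v‖ ^ 2 = (1-t) * ‖u‖ ^ 2 + t * ‖v‖ ^ 2 - t * (1-t) * ‖u - v‖ ^ 2 := by
  have h1 : ∀ w : E, ‖w‖ ^ 2 = ⟪w, w⟫ := fun w => (real_inner_self_eq_norm_sq w).symm
  rw [h1, h1, h1, h1]
  simp only [inner_add_add_self, inner_sub_sub_self, real_inner_smul_left, real_inner_smul_right]
  ring

set_option maxHeartbeats 1600000 in
theorem stmt13 {d e : ℕ} (f r : EuclideanSpace ℝ (Fin d) → ℝ)
    (A : EuclideanSpace ℝ (Fin d) →L[ℝ] EuclideanSpace ℝ (Fin e)) (μ κ c : ℝ)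
    (hf : Differentiable ℝ f)
    (hcurv : ∀ x y, f x - f y - ⟪gradient f y, x - y⟫ ≥ μ / 2 * ‖x - y‖ ^ 2)
    (hr : ConvexOn ℝ Set.univ r) (hrl : LowerSemicontinuous r)
    (hκ : κ > -μ) (hc : 0 ≤ c)
    (z : EuclideanSpace ℝ (Fin d))
    (xm : EuclideanSpace ℝ (Fin e) → EuclideanSpace ℝ (Fin d))
    (hmin : ∀ l, IsMinOn
      (fun x => f x + r x + ⟪l, A x⟫ + c / 2 * ‖A x‖ ^ 2 + κ / 2 * ‖x - z‖ ^ 2)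
      Set.univ (xm l)) :
    ∀ l₁ l₂, ‖xm l₁ - xm l₂‖ ≤ ‖A‖ / (κ + μ) * ‖l₁ - l₂‖ := by
  have hκμ : 0 < κ + μ := by linarith
  set s : ℝ := (κ + μ) / 2 with hsdef
  have hspos : 0 < s := by positivity
  set h : EuclideanSpace ℝ (Fin e) → EuclideanSpace ℝ (Fin d) → ℝ :=
    fun l x => f x + r x + ⟪l, A x⟫ + c / 2 * ‖A x‖ ^ 2 + κ / 2 * ‖x - z‖ ^ 2 with hh
  -- key step inequality for each t ∈ (0,1]
  have key : ∀ (l : EuclideanSpace ℝ (Fin e)) (y : EuclideanSpace ℝ (Fin d)) (t : ℝ),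
      0 < t → t ≤ 1 → s * (1 - t) * ‖y - xm l‖ ^ 2 ≤ h l y - h l (xm l) := by
    intro l y t ht0 ht1
    have h1t0 : 0 ≤ 1 - t := by linarith
    set x₁ := xm l with hx₁
    set m := (1 - t) • x₁ + t • y with hm
    have hmin' : h l x₁ ≤ h l m := isMinOn_iff.mp (hmin l) m (Set.mem_univ m)
    set B : ℝ := ‖y - x₁‖ ^ 2 with hB
    have hBnn : 0 ≤ B := sq_nonneg _
    -- f part
    have hxm : x₁ - m = t • (x₁ - y) := by rw [hm]; module
    have hym : y - m = (1 - t) • (y - x₁) := by rw [hm]; module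
    have hf1 := hcurv x₁ m
    have hf2 := hcurv y m
    rw [hxm] at hf1
    rw [hym] at hf2
    have e1 : ⟪gradient f m, t • (x₁ - y)⟫ = t * ⟪gradient f m, x₁ - y⟫ :=
      real_inner_smul_right _ _ _
    have e2 : ⟪gradient f m, (1 - t) • (y - x₁)⟫ = -((1 - t) * ⟪gradient f m, x₁ - y⟫) := by
      rw [real_inner_smul_right]
      have : y - x₁ = -(x₁ - y) := by abel
      rw [this, inner_neg_right]; ring
    have n1 : ‖t • (x₁ - y)‖ ^ 2 = t ^ 2 * B := by
      rw [norm_smul, Real.norm_eq_abs, mul_pow, sq_abs, hB, norm_sub_rev]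
    have n2 : ‖(1 - t) • (y - x₁)‖ ^ 2 = (1 - t) ^ 2 * B := by
      rw [norm_smul, Real.norm_eq_abs, mul_pow, sq_abs]
    rw [e1, n1] at hf1
    rw [e2, n2] at hf2
    set ip : ℝ := ⟪gradient f m, x₁ - y⟫ with hip
    have c1 : (1 - t) * (μ / 2 * (t ^ 2 * B)) ≤ (1 - t) * (f x₁ - f m - t * ip) :=
      mul_le_mul_of_nonneg_left hf1 h1t0
    have c2 : t * (μ / 2 * ((1 - t) ^ 2 * B)) ≤ t * (f y - f m - -((1 - t) * ip)) :=
      mul_le_mul_of_nonneg_left hf2 ht0.le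
    have hfm : f m ≤ (1 - t) * f x₁ + t * f y - μ / 2 * (t * (1 - t) * B) := by linarith [c1, c2]
    -- r part
    have hrm : r m ≤ (1 - t) * r x₁ + t * r y :=
      hr.2 (Set.mem_univ x₁) (Set.mem_univ y) h1t0 ht0.le (by ring)
    -- inner part
    have hAm : A m = (1 - t) • A x₁ + t • A y := by rw [hm]; simp [map_add, map_smul]
    have hin : ⟪l, A m⟫ = (1 - t) * ⟪l, A x₁⟫ + t * ⟪l, A y⟫ := by
      rw [hAm, inner_add_right, real_inner_smul_right, real_inner_smul_right]
    -- A-norm part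
    have hAn : ‖A m‖ ^ 2
        = (1 - t) * ‖A x₁‖ ^ 2 + t * ‖A y‖ ^ 2 - t * (1 - t) * ‖A x₁ - A y‖ ^ 2 := by
      rw [hAm]; exact sq_combo' _ _ _
    have hAc : c / 2 * ‖A m‖ ^ 2 ≤ c / 2 * ((1 - t) * ‖A x₁‖ ^ 2 + t * ‖A y‖ ^ 2) := by
      have hnn : 0 ≤ t * (1 - t) * ‖A x₁ - A y‖ ^ 2 := by positivity
      rw [hAn]
      have hc2 : (0:ℝ) ≤ c / 2 := by linarith
      have := mul_le_mul_of_nonneg_left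
        (by linarith :
          (1 - t) * ‖A x₁‖ ^ 2 + t * ‖A y‖ ^ 2 - t * (1 - t) * ‖A x₁ - A y‖ ^ 2
            ≤ (1 - t) * ‖A x₁‖ ^ 2 + t * ‖A y‖ ^ 2) hc2
      linarith [this]
    -- z part
    have hzm : m - z = (1 - t) • (x₁ - z) + t • (y - z) := by rw [hm]; module
    have hzn : ‖m - z‖ ^ 2 = (1 - t) * ‖x₁ - z‖ ^ 2 + t * ‖y - z‖ ^ 2 - t * (1 - t) * B := by
      rw [hzm, sq_combo']
      have : x₁ - z - (y - z) = x₁ - y := by abel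
      rw [this, hB, norm_sub_rev x₁ y]
    -- combine
    have hz2 : κ / 2 * ‖m - z‖ ^ 2
        = κ / 2 * ((1 - t) * ‖x₁ - z‖ ^ 2 + t * ‖y - z‖ ^ 2 - t * (1 - t) * B) := by
      rw [hzn]
    have hcomb : h l m ≤ (1 - t) * h l x₁ + t * h l y - s * (t * (1 - t) * B) := by
      have expand : (1 - t) * h l x₁ + t * h l y - s * (t * (1 - t) * B)
          = ((1 - t) * f x₁ + t * f y - μ / 2 * (t * (1 - t) * B))
            + ((1 - t) * r x₁ + t * r y)
            + ((1 - t) * ⟪l, A x₁⟫ + t * ⟪l, A y⟫)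
            + (c / 2 * ((1 - t) * ‖A x₁‖ ^ 2 + t * ‖A y‖ ^ 2))
            + (κ / 2 * ((1 - t) * ‖x₁ - z‖ ^ 2 + t * ‖y - z‖ ^ 2 - t * (1 - t) * B)) := by
        simp only [hh, hsdef]; ring
      have lhs : h l m = f m + r m + ⟪l, A m⟫ + c / 2 * ‖A m‖ ^ 2 + κ / 2 * ‖m - z‖ ^ 2 := rfl
      rw [lhs, expand]
      linarith [hfm, hrm, hin.le, hAc, hz2.le]
    have h3 : h l x₁ ≤ (1 - t) * h l x₁ + t * h l y - s * (t * (1 - t) * B) :=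
      le_trans hmin' hcomb
    have step : t * (s * (1 - t) * B) ≤ t * (h l y - h l x₁) := by nlinarith [h3]
    exact le_of_mul_le_mul_left step ht0
  -- quadratic growth at minimizer
  have growth : ∀ (l : EuclideanSpace ℝ (Fin e)) (y : EuclideanSpace ℝ (Fin d)),
      s * ‖y - xm l‖ ^ 2 ≤ h l y - h l (xm l) := by
    intro l y
    refine le_of_forall_pos_le_add ?_
    intro ε hε
    set B : ℝ := ‖y - xm l‖ ^ 2 with hB
    have hBnn : 0 ≤ B := sq_nonneg _
    have hden : 0 < s * B + 1 := by positivity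
    set t : ℝ := min 1 (ε / (s * B + 1)) with ht
    have ht0 : 0 < t := lt_min one_pos (by positivity)
    have ht1 : t ≤ 1 := min_le_left _ _
    have hk := key l y t ht0 ht1
    have htle : t ≤ ε / (s * B + 1) := min_le_right _ _
    have htsB : t * (s * B) ≤ ε := by
      have h1 : t * (s * B) ≤ (ε / (s * B + 1)) * (s * B + 1) := by
        have hsB : 0 ≤ s * B := by positivity
        have : 0 ≤ ε / (s * B + 1) := by positivity
        nlinarith
      rwa [div_mul_cancel₀ _ (ne_of_gt hden)] at h1
    rw [← hB] at hk
    linarith [hk, htsB]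
  -- combine for two multipliers
  intro l₁ l₂
  have g1 := growth l₁ (xm l₂)
  have g2 := growth l₂ (xm l₁)
  set x₁ := xm l₁ with hx1
  set x₂ := xm l₂ with hx2
  set D : ℝ := ‖x₁ - x₂‖ with hD
  have hDnn : 0 ≤ D := norm_nonneg _
  have hrev : ‖x₂ - x₁‖ = D := by rw [hD, norm_sub_rev]
  rw [hrev] at g1
  have hsum : 2 * s * D ^ 2 ≤ ⟪l₁ - l₂, A x₂ - A x₁⟫ := by
    have hdiff : (h l₁ x₂ - h l₁ x₁) + (h l₂ x₁ - h l₂ x₂)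
        = ⟪l₁ - l₂, A x₂ - A x₁⟫ := by
      simp only [hh, inner_sub_left, inner_sub_right]
      ring
    linarith [g1, g2, hdiff.le, hdiff.ge]
  have hcs : ⟪l₁ - l₂, A x₂ - A x₁⟫ ≤ ‖l₁ - l₂‖ * (‖A‖ * D) := by
    calc ⟪l₁ - l₂, A x₂ - A x₁⟫ ≤ ‖l₁ - l₂‖ * ‖A x₂ - A x₁‖ := real_inner_le_norm _ _
      _ ≤ ‖l₁ - l₂‖ * (‖A‖ * D) := by
          have : ‖A x₂ - A x₁‖ ≤ ‖A‖ * D := by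
            rw [← map_sub, hD, ← norm_sub_rev x₂ x₁]
            exact A.le_opNorm _
          exact mul_le_mul_of_nonneg_left this (norm_nonneg _)
  have hkey : (κ + μ) * D ^ 2 ≤ ‖A‖ * ‖l₁ - l₂‖ * D := by
    have h2 : 2 * s * D ^ 2 = (κ + μ) * D ^ 2 := by rw [hsdef]; ring
    linarith [hsum, hcs, h2]
  rcases eq_or_lt_of_le hDnn with hD0 | hDpos
  · rw [← hD0]
    positivity
  · rw [div_mul_eq_mul_div, le_div_iff₀ hκμ]
    nlinarith [hkey, hDpos]
end

section
/- Let g: R^n → R ∪ {+∞} be g(x) = h(x) + r(x) with h m-strongly convex, differentiable with M-Lipschitz gradient, and r proper closed convex. Define the proximal gradient residual G(x) = x - prox_r^1(x - ∇h(x)), where prox_r^1(u) = argmin_v { (1/2)‖u - v‖² + r(v) }. Then for the unique minimizer x* of g and any x, ‖x - x*‖ ≤ ((M+1)/m)‖G(x)‖. -/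
/-!
The minimiser `x*` of `h + r` and the proximal point `y = p (x - ∇h x)` both satisfy variational
inequalities: restricting the objective to a segment leaving the minimiser and bounding `r` there
by its chord gives a one-variable function minimised at the endpoint, so its derivative there is
nonnegative. Testing each inequality at the other point, adding, and using the strong monotonicity
`m‖x - x*‖² ≤ ⟪∇h x - ∇h x*, x - x*⟫`, the residual `G = x - y` and the error `D = x - x*` satisfy
`m‖D‖² + ‖G‖² ≤ (M + 1)‖D‖‖G‖`.
-/

open Set AffineMap InnerProductSpace

theorem IsMinOn.hasDerivAt_nonneg {φ : ℝ → ℝ} {φ' a b : ℝ} (hmin : IsMinOn φ (Icc a b) a)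
    (hab : a < b) (hφ : HasDerivAt φ φ' a) : 0 ≤ φ' := by
  have hcone : b - a ∈ posTangentConeAt (Icc a b) a :=
    mem_posTangentConeAt_of_segment_subset (by rw [add_sub_cancel, segment_eq_Icc hab.le])
  have := hmin.localize.hasFDerivWithinAt_nonneg hφ.hasDerivWithinAt.hasFDerivWithinAt hcone
  rw [ContinuousLinearMap.toSpanSingleton_apply, smul_eq_mul] at this
  exact nonneg_of_mul_nonneg_right this (sub_pos.2 hab)

section NormedSpace

variable {E : Type*} [NormedAddCommGroup E] [NormedSpace ℝ E] {f : E → ℝ} {f' : E →L[ℝ] ℝ}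
  {x : E}

theorem HasFDerivAt.hasDerivAt_comp_lineMap (hf : HasFDerivAt f f' x) (y : E) :
    HasDerivAt (fun t : ℝ => f (lineMap x y t)) (f' (y - x)) 0 :=
  (by simpa using hf : HasFDerivAt f f' (lineMap x y (0 : ℝ))).comp_hasDerivAt 0 hasDerivAt_lineMap

theorem StrongConvexOn.add_sq_norm_le_sub_of_hasFDerivAt {m : ℝ} (hf : StrongConvexOn univ m f)
    (hf' : HasFDerivAt f f' x) (y : E) : f' (y - x) + m / 2 * ‖y - x‖ ^ 2 ≤ f y - f x := by
  let φ : ℝ → ℝ := fun t =>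
    lineMap (f x) (f y) t - m / 2 * ‖x - y‖ ^ 2 * ((1 - t) * t) - f (lineMap x y t)
  have hφmin : IsMinOn φ (Icc 0 1) 0 := fun t ⟨ht0, ht1⟩ => by
    have := hf.2 (mem_univ x) (mem_univ y) (sub_nonneg.2 ht1) ht0 (sub_add_cancel 1 t)
    simp only [lineMap_apply_module, smul_eq_mul, φ, mem_ofPred_eq] at this ⊢
    simp only [sub_zero, one_smul, zero_smul, add_zero]
    linarith
  have hφ : HasDerivAt φ (f y - f x - m / 2 * ‖x - y‖ ^ 2 - f' (y - x)) 0 := by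
    have hquad : HasDerivAt (fun t : ℝ => (1 - t) * t) 1 0 :=
      (((hasDerivAt_id (0 : ℝ)).const_sub 1).mul (hasDerivAt_id 0)).congr_deriv (by simp)
    exact ((hasDerivAt_lineMap.sub (hquad.const_mul _)).sub
      (hf'.hasDerivAt_comp_lineMap y)).congr_deriv (by ring)
  have := hφmin.hasDerivAt_nonneg one_pos hφ
  rw [norm_sub_rev]
  linarith

theorem IsMinOn.sub_le_of_hasFDerivAt_of_convexOn {r : E → ℝ}
    (hmin : IsMinOn (fun x => f x + r x) univ x) (hf : HasFDerivAt f f' x)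
    (hr : ConvexOn ℝ univ r) (v : E) : r x - r v ≤ f' (v - x) := by
  let φ : ℝ → ℝ := fun t => f (lineMap x v t) + lineMap (r x) (r v) t
  have hφmin : IsMinOn φ (Icc 0 1) 0 := fun t ⟨ht0, ht1⟩ => by
    have hr' := hr.2 (mem_univ x) (mem_univ v) (sub_nonneg.2 ht1) ht0 (sub_add_cancel 1 t)
    have := hmin (mem_univ (lineMap x v t))
    simp only [lineMap_apply_module, smul_eq_mul, φ, mem_ofPred_eq] at this hr' ⊢
    simp only [sub_zero, one_smul, zero_smul, add_zero, zero_mul, one_mul]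
    linarith
  have hφ : HasDerivAt φ (f' (v - x) + (r v - r x)) 0 :=
    (hf.hasDerivAt_comp_lineMap v).add hasDerivAt_lineMap
  linarith [hφmin.hasDerivAt_nonneg one_pos hφ]

end NormedSpace

section InnerProductSpace

variable {F : Type*} [NormedAddCommGroup F] [InnerProductSpace ℝ F]

theorem StrongConvexOn.mul_sq_norm_sub_le_inner_sub [CompleteSpace F] {f : F → ℝ} {m : ℝ}
    {x y g₁ g₂ : F} (hf : StrongConvexOn univ m f) (hx : HasGradientAt f g₁ x)
    (hy : HasGradientAt f g₂ y) : m * ‖x - y‖ ^ 2 ≤ ⟪g₁ - g₂, x - y⟫_ℝ := by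
  have hxy := hf.add_sq_norm_le_sub_of_hasFDerivAt hx.hasFDerivAt y
  have hyx := hf.add_sq_norm_le_sub_of_hasFDerivAt hy.hasFDerivAt x
  rw [toDual_apply_apply, ← neg_sub, inner_neg_right, norm_neg] at hxy
  rw [toDual_apply_apply] at hyx
  rw [inner_sub_left]
  linarith

theorem IsMinOn.inner_sub_le_of_prox {r : F → ℝ} {u p : F} (hr : ConvexOn ℝ univ r)
    (hp : IsMinOn (fun v => 1 / 2 * ‖u - v‖ ^ 2 + r v) univ p) (v : F) :
    ⟪u - p, v - p⟫_ℝ ≤ r v - r p := by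
  have hsq : HasFDerivAt (fun w => 1 / 2 * ‖u - w‖ ^ 2) (-innerSL ℝ (u - p)) p :=
    (((hasFDerivAt_id p).const_sub u).norm_sq.const_mul (1 / 2 : ℝ)).congr_fderiv (by ext; simp)
  have := hp.sub_le_of_hasFDerivAt_of_convexOn hsq hr v
  simp only [neg_apply, innerSL_apply_apply] at this
  linarith

theorem norm_le_of_inner_sub_nonpos {D G Δ : F} {m M : ℝ} (hm : 0 < m)
    (hmono : m * ‖D‖ ^ 2 ≤ ⟪Δ, D⟫_ℝ) (hlip : ‖Δ‖ ≤ M * ‖D‖) (hvi : ⟪G - Δ, G - D⟫_ℝ ≤ 0) :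
    ‖D‖ ≤ (M + 1) / m * ‖G‖ := by
  have hexpand : ⟪G - Δ, G - D⟫_ℝ = ‖G‖ ^ 2 - ⟪G, D⟫_ℝ - ⟪Δ, G⟫_ℝ + ⟪Δ, D⟫_ℝ := by
    simp only [inner_sub_left, inner_sub_right, real_inner_self_eq_norm_sq]
    ring
  have hGD : ⟪G, D⟫_ℝ ≤ ‖G‖ * ‖D‖ := real_inner_le_norm G D
  have hΔG : ⟪Δ, G⟫_ℝ ≤ M * ‖D‖ * ‖G‖ :=
    (real_inner_le_norm Δ G).trans (mul_le_mul_of_nonneg_right hlip (norm_nonneg G))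
  have key : m * ‖D‖ ^ 2 + ‖G‖ ^ 2 ≤ (M + 1) * ‖D‖ * ‖G‖ := by nlinarith
  rw [div_mul_eq_mul_div, le_div_iff₀ hm]
  rcases (norm_nonneg D).eq_or_lt with hD | hD
  · have hG : G = 0 := by simpa [← hD] using key
    simp [← hD, hG]
  · nlinarith [norm_nonneg G]

end InnerProductSpace

theorem stmt15_general {n : ℕ} (h r : EuclideanSpace ℝ (Fin n) → ℝ) (m M : ℝ) (hm : 0 < m)
    (hdiff : Differentiable ℝ h)
    (hsc : ConvexOn ℝ Set.univ (fun x => h x - m / 2 * ‖x‖ ^ 2))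
    (hM : ∀ x y, ‖gradient h x - gradient h y‖ ≤ M * ‖x - y‖)
    (hr : ConvexOn ℝ Set.univ r)
    (p : EuclideanSpace ℝ (Fin n) → EuclideanSpace ℝ (Fin n))
    (hp : ∀ u v, 1 / 2 * ‖u - p u‖ ^ 2 + r (p u) ≤ 1 / 2 * ‖u - v‖ ^ 2 + r v)
    (xs : EuclideanSpace ℝ (Fin n))
    (hxs : IsMinOn (fun x => h x + r x) Set.univ xs) :
    ∀ x, ‖x - xs‖ ≤ (M + 1) / m * ‖x - p (x - gradient h x)‖ := by
  intro x
  have hgrad (z) : HasGradientAt h (gradient h z) z := (hdiff z).hasGradientAt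
  have hprox := IsMinOn.inner_sub_le_of_prox hr (fun v _ => hp (x - gradient h x) v) xs
  set y := p (x - gradient h x)
  have hopt := hxs.sub_le_of_hasFDerivAt_of_convexOn (hgrad xs).hasFDerivAt hr y
  rw [toDual_apply_apply] at hopt
  have hmono :=
    (strongConvexOn_iff_convex.mpr hsc).mul_sq_norm_sub_le_inner_sub (hgrad x) (hgrad xs)
  refine norm_le_of_inner_sub_nonpos hm hmono (hM x xs) ?_
  calc ⟪(x - y) - (gradient h x - gradient h xs), (x - y) - (x - xs)⟫_ℝ
      = ⟪x - gradient h x - y, xs - y⟫_ℝ - ⟪gradient h xs, y - xs⟫_ℝ := by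
        rw [← neg_sub xs y, inner_neg_right, sub_neg_eq_add, ← inner_add_left]
        congr 1 <;> abel
    _ ≤ 0 := by linarith

theorem stmt15 {n : ℕ} (h r : EuclideanSpace ℝ (Fin n) → ℝ) (m M : ℝ) (hm : 0 < m)
    (hdiff : Differentiable ℝ h)
    (hsc : ConvexOn ℝ Set.univ (fun x => h x - m / 2 * ‖x‖ ^ 2))
    (hM : ∀ x y, ‖gradient h x - gradient h y‖ ≤ M * ‖x - y‖)
    (hr : ConvexOn ℝ Set.univ r) (hrl : LowerSemicontinuous r)
    (p : EuclideanSpace ℝ (Fin n) → EuclideanSpace ℝ (Fin n))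
    (hp : ∀ u v, 1 / 2 * ‖u - p u‖ ^ 2 + r (p u) ≤ 1 / 2 * ‖u - v‖ ^ 2 + r v)
    (xs : EuclideanSpace ℝ (Fin n))
    (hxs : IsMinOn (fun x => h x + r x) Set.univ xs) :
    ∀ x, ‖x - xs‖ ≤ (M + 1) / m * ‖x - p (x - gradient h x)‖ :=
  stmt15_general h r m M hm hdiff hsc hM hr p hp xs hxs
end
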